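/- For a finite rooted tree T with edge set E, the Möbius function of the interval [H, ∅] of the pruning poset satisfies μ(H, ∅) = (−1)^{|H|} if H equals its set of minimal elements (i.e., H is an antichain of edges), and μ(H, ∅) = 0 otherwise. -/

import Mathlib

open scoped Classical

/-- A finite rooted tree, encoded by its tree partial order on the vertex set `V`:
the root is the bottom element `⊥`, and any two ancestors of a common vertex are
comparable. -/
def TreeOrder (V : Type*) [PartialOrder V] [OrderBot V] : Prop :=
  ∀ a b c : V, b ≤ a → c ≤ a → (b ≤ c ∨ c ≤ b)

/-- Edges of the rooted tree, identified with their upper ends (the non-root vertices).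
The induced partial order on edges is the subtype order. -/
abbrev Edge (V : Type*) [PartialOrder V] [OrderBot V] := {v : V // v ≠ ⊥}

variable {V : Type*} [Fintype V] [DecidableEq V] [PartialOrder V] [OrderBot V]

/-- The stump set `V_γ(H)`: the vertex set of the connected component of the root
in the forest `T − H`. -/
def stump (H : Finset (Edge V)) : Set V :=
  {v | ∀ e ∈ H, ¬ (e.val ≤ v)}

/-- The pruning order: `H ≼_P K` iff `H = K ∪ A` for some set `A` of edges of the
stump tree of `T − K`. -/
def pleP (H K : Finset (Edge V)) : Prop :=
  ∃ A : Finset (Edge V), (∀ e ∈ A, e.val ∈ stump K) ∧ H = K ∪ A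

/-- `M(H)`: the set of minimal elements of `H` with respect to the edge order. -/
noncomputable def minimalsIn (H : Finset (Edge V)) : Finset (Edge V) :=
  H.filter (fun e => ∀ f ∈ H, f ≤ e → f = e)

/-- `pleP H K` holds iff `K ⊆ H` and `K` is up-closed within `H`. -/
lemma pleP_iff' (H K : Finset (Edge V)) :
    pleP H K ↔ K ⊆ H ∧ ∀ e ∈ H, ∀ f ∈ K, f ≤ e → e ∈ K := by
  constructor
  · rintro ⟨A, hA, rfl⟩
    refine ⟨Finset.subset_union_left, ?_⟩
    intro e he f hf hle
    by_contra heK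
    have heA : e ∈ A := by
      rcases Finset.mem_union.mp he with h | h
      · exact absurd h heK
      · exact h
    exact hA e heA f hf hle
  · rintro ⟨hKH, hup⟩
    refine ⟨H \ K, ?_, (Finset.union_sdiff_of_subset hKH).symm⟩
    intro e he f hf hle
    rcases Finset.mem_sdiff.mp he with ⟨heH, heK⟩
    exact heK (hup e heH f hf hle)

lemma pleP_refl (K : Finset (Edge V)) : pleP K K :=
  (pleP_iff' K K).mpr ⟨Finset.Subset.refl K, fun _ _ _ _ _ => by assumption⟩

/-- for the Möbius function `μ` of the pruning poset (characterised by its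
defining recursion), one has `μ(H, ∅) = (−1)^{|H|}` if `H = M(H)`, i.e. `H` equals its
set of minimal elements (`H` is an antichain of edges), and `μ(H, ∅) = 0` otherwise. -/
theorem mobius_pruning_empty (hT : TreeOrder V)
    (μ : Finset (Edge V) → Finset (Edge V) → ℤ)
    (hrefl : ∀ H : Finset (Edge V), μ H H = 1)
    (hrec : ∀ H K : Finset (Edge V), pleP H K → H ≠ K →
      (∑ z : Finset (Edge V), if pleP H z ∧ pleP z K then μ H z else 0) = 0) :
    ∀ H : Finset (Edge V),
      μ H ∅ = if H = minimalsIn H then (-1 : ℤ) ^ H.card else 0 := by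
  intro H
  have key : ∀ n (K : Finset (Edge V)), (H \ K).card = n → pleP H K →
      μ H K = if (∀ e ∈ H \ K, ∀ f ∈ H \ K, f ≤ e → f = e)
        then (-1 : ℤ) ^ (H \ K).card else 0 := by
    intro n
    induction n using Nat.strong_induction_on with
    | _ n ih =>
      intro K hn hK
      by_cases hEq : H = K
      · subst hEq
        simp [hrefl]
      · obtain ⟨hKH, hKup⟩ := (pleP_iff' H K).mp hK
        -- the set of elements of the interval [H, K]
        set S : Finset (Finset (Edge V)) :=
          Finset.univ.filter (fun z => pleP H z ∧ pleP z K) with hS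
        -- characterisation of interval membership
        have hint : ∀ z : Finset (Edge V), z ∈ S ↔
            (K ⊆ z ∧ z ⊆ H ∧ ∀ e ∈ H, ∀ f ∈ z, f ≤ e → e ∈ z) := by
          intro z
          rw [hS, Finset.mem_filter]
          constructor
          · rintro ⟨-, h1, h2⟩
            obtain ⟨hzH, hzup⟩ := (pleP_iff' H z).mp h1
            obtain ⟨hKz, -⟩ := (pleP_iff' z K).mp h2
            exact ⟨hKz, hzH, hzup⟩
          · rintro ⟨hKz, hzH, hzup⟩
            refine ⟨Finset.mem_univ _, (pleP_iff' H z).mpr ⟨hzH, hzup⟩,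
              (pleP_iff' z K).mpr ⟨hKz, ?_⟩⟩
            intro e he f hf hle
            exact hKup e (hzH he) f hf hle
        -- the set of minimal elements of D := H \ K
        set D : Finset (Edge V) := H \ K with hD
        set minD : Finset (Edge V) := D.filter (fun e => ∀ f ∈ D, f ≤ e → f = e)
          with hminD
        have hminD_sub : minD ⊆ D := Finset.filter_subset _ _
        have hD_sub : D ⊆ H := Finset.sdiff_subset
        have hDne : D.Nonempty := by
          rw [hD, Finset.sdiff_nonempty]
          intro hsub
          exact hEq (Finset.Subset.antisymm hsub hKH)
        have hminDne : minD.Nonempty := by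
          obtain ⟨m, hm, hmin⟩ : ∃ m ∈ D, ∀ x ∈ D, ¬ x < m := by
            obtain ⟨m, hm⟩ := Finset.exists_minimal hDne
            exact ⟨m, hm.1, fun x hx hlt => (lt_iff_le_not_ge.mp hlt).2 (hm.2 hx hlt.le)⟩
          refine ⟨m, Finset.mem_filter.mpr ⟨hm, ?_⟩⟩
          intro f hf hle
          by_contra hne
          exact hmin f hf (lt_of_le_of_ne hle hne)
        -- membership in the antichain part of the interval
        have hchar : ∀ z : Finset (Edge V),
            (z ∈ S ∧ ∀ e ∈ H \ z, ∀ f ∈ H \ z, f ≤ e → f = e) ↔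
              (z ⊆ H ∧ H \ z ⊆ minD) := by
          intro z
          constructor
          · rintro ⟨hzS, hanti⟩
            obtain ⟨hKz, hzH, hzup⟩ := (hint z).mp hzS
            refine ⟨hzH, ?_⟩
            intro e he
            rcases Finset.mem_sdiff.mp he with ⟨heH, hez⟩
            have heD : e ∈ D := by
              rw [hD, Finset.mem_sdiff]
              exact ⟨heH, fun heK => hez (hKz heK)⟩
            refine Finset.mem_filter.mpr ⟨heD, ?_⟩
            intro f hf hle
            rcases Finset.mem_sdiff.mp (hD ▸ hf) with ⟨hfH, hfK⟩
            have hfz : f ∉ z := fun hfz => hez (hzup e heH f hfz hle)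
            exact hanti e he f (Finset.mem_sdiff.mpr ⟨hfH, hfz⟩) hle
          · rintro ⟨hzH, hsub⟩
            have hanti : ∀ e ∈ H \ z, ∀ f ∈ H \ z, f ≤ e → f = e := by
              intro e he f hf hle
              have he' := Finset.mem_filter.mp (hsub he)
              exact he'.2 f (hminD_sub (hsub hf)) hle
            refine ⟨(hint z).mpr ⟨?_, hzH, ?_⟩, hanti⟩
            · intro k hk
              by_contra hkz
              have : k ∈ H \ z := Finset.mem_sdiff.mpr ⟨hKH hk, hkz⟩
              have := Finset.mem_sdiff.mp (hminD_sub (hsub this))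
              exact this.2 hk
            · intro e he f hf hle
              by_contra hez
              have heminD := hsub (Finset.mem_sdiff.mpr ⟨he, hez⟩)
              have heD := hminD_sub heminD
              have hfD : f ∈ D := by
                rw [hD, Finset.mem_sdiff]
                refine ⟨hzH hf, fun hfK => ?_⟩
                have := hKup e he f hfK hle
                exact (Finset.mem_sdiff.mp (hD ▸ heD)).2 this
              have := (Finset.mem_filter.mp heminD).2 f hfD hle
              exact hez (this ▸ hf)
        -- the signed sum over the whole interval vanishes
        have hzero : (∑ z ∈ S, if (∀ e ∈ H \ z, ∀ f ∈ H \ z, f ≤ e → f = e)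
            then (-1 : ℤ) ^ (H \ z).card else 0) = 0 := by
          rw [← Finset.sum_filter]
          rw [Finset.sum_nbij' (i := fun z => H \ z) (j := fun u => H \ u)
            (t := minD.powerset) (g := fun u => (-1 : ℤ) ^ u.card)
            (hi := ?_) (hj := ?_) (left_neg := ?_) (right_neg := ?_) (h := ?_)]
          · exact Finset.sum_powerset_neg_one_pow_card_of_nonempty hminDne
          · intro z hz
            rw [Finset.mem_filter] at hz
            exact Finset.mem_powerset.mpr ((hchar z).mp ⟨hz.1, hz.2⟩).2
          · intro u hu
            have huminD := Finset.mem_powerset.mp hu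
            have huH : u ⊆ H := fun x hx => hD_sub (hminD_sub (huminD hx))
            have h1 : H \ (H \ u) = u := Finset.sdiff_sdiff_eq_self huH
            have := (hchar (H \ u)).mpr ⟨Finset.sdiff_subset, by rw [h1]; exact huminD⟩
            exact Finset.mem_filter.mpr ⟨this.1, this.2⟩
          · intro z hz
            rw [Finset.mem_filter] at hz
            exact Finset.sdiff_sdiff_eq_self ((hchar z).mp ⟨hz.1, hz.2⟩).1
          · intro u hu
            have huminD := Finset.mem_powerset.mp hu
            exact Finset.sdiff_sdiff_eq_self
              (fun x hx => hD_sub (hminD_sub (huminD hx)))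
          · intro z hz
            rfl
        -- now use the recursion
        have hsum := hrec H K hK hEq
        rw [← Finset.sum_filter, ← hS] at hsum
        have hKS : K ∈ S := by
          rw [hS, Finset.mem_filter]
          exact ⟨Finset.mem_univ _, hK, pleP_refl K⟩
        rw [← Finset.add_sum_erase S (μ H) hKS] at hsum
        have hih : ∀ z ∈ S.erase K, μ H z =
            if (∀ e ∈ H \ z, ∀ f ∈ H \ z, f ≤ e → f = e)
              then (-1 : ℤ) ^ (H \ z).card else 0 := by
          intro z hz
          rcases Finset.mem_erase.mp hz with ⟨hzK, hzS⟩
          obtain ⟨hKz, hzH, -⟩ := (hint z).mp hzS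
          have hcard : (H \ z).card < n := by
            rw [← hn]
            apply Finset.card_lt_card
            rw [Finset.ssubset_iff_of_subset (Finset.sdiff_subset_sdiff
              (Finset.Subset.refl H) hKz)]
            obtain ⟨x, hxz, hxK⟩ := Finset.exists_of_ssubset
              (lt_of_le_of_ne hKz (Ne.symm hzK))
            refine ⟨x, Finset.mem_sdiff.mpr ⟨hzH hxz, hxK⟩, ?_⟩
            intro hx
            exact (Finset.mem_sdiff.mp hx).2 hxz
          have hzpleP : pleP H z := ((hint z).mp hzS) |>.2.2 |>
            fun hzup => (pleP_iff' H z).mpr ⟨hzH, hzup⟩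
          exact ih _ hcard z rfl hzpleP
        rw [Finset.sum_congr rfl hih] at hsum
        have herase : (∑ z ∈ S.erase K, if (∀ e ∈ H \ z, ∀ f ∈ H \ z, f ≤ e → f = e)
            then (-1 : ℤ) ^ (H \ z).card else 0)
            = -(if (∀ e ∈ H \ K, ∀ f ∈ H \ K, f ≤ e → f = e)
                then (-1 : ℤ) ^ (H \ K).card else 0) := by
          have := Finset.add_sum_erase S (fun z =>
            if (∀ e ∈ H \ z, ∀ f ∈ H \ z, f ≤ e → f = e)
              then (-1 : ℤ) ^ (H \ z).card else 0) hKS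
          rw [hzero] at this
          linarith
        rw [herase] at hsum
        linarith
  have h0 := key (H \ ∅).card ∅ rfl ⟨H, by intro e _; intro f hf; simp at hf, by simp⟩
  rw [Finset.sdiff_empty] at h0
  rw [h0]
  have hiff : (∀ e ∈ H, ∀ f ∈ H, f ≤ e → f = e) ↔ H = minimalsIn H := by
    unfold minimalsIn
    rw [eq_comm, Finset.filter_eq_self]
  exact if_congr hiff rfl rfl
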